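/- Let G = ⟨x₁,…,xₙ; r⟩ be a group such that the T-system of the generating tuple (x₁,…,xₙ) contains only finitely many Nielsen equivalence classes, and such that L/Inn(G) is residually finite, where L is the group of tame automorphisms of G with respect to (x₁,…,xₙ). Then Out(G) is residually finite. -/
import Mathlib


def innAut (G : Type*) [Group G] : Subgroup (MulAut G) := (MulAut.conj : G →* MulAut G).range

instance innAut_normal (G : Type*) [Group G] : (innAut G).Normal := by
  constructor
  rintro x ⟨g, rfl⟩ f
  refine ⟨f g, ?_⟩
  ext h
  simp [MulAut.conj_apply, MulAut.mul_apply, mul_assoc]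

abbrev Out (G : Type*) [Group G] := MulAut G ⧸ innAut G

def ResiduallyFinite (G : Type*) [Group G] : Prop :=
  ∀ g : G, g ≠ 1 → ∃ N : Subgroup G, N.Normal ∧ Finite (G ⧸ N) ∧ g ∉ N

noncomputable def expSum (i : Fin 2) : FreeGroup (Fin 2) →* Multiplicative ℤ :=
  FreeGroup.lift (fun j => Multiplicative.ofAdd (if j = i then (1 : ℤ) else 0))

noncomputable def σ (i : Fin 2) (w : FreeGroup (Fin 2)) : ℤ :=
  Multiplicative.toAdd (expSum i w)

def NielsenEquiv {G : Type*} [Group G] {n : ℕ} (Y Z : Fin n → G) : Prop :=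
  ∃ φ : FreeGroup (Fin n) ≃* FreeGroup (Fin n),
    ∀ i, FreeGroup.lift Y (φ (FreeGroup.of i)) = Z i

def SameTSystem {G : Type*} [Group G] {n : ℕ} (Y Z : Fin n → G) : Prop :=
  ∃ ψ : G ≃* G, NielsenEquiv (fun i => ψ (Y i)) Z

section Aux

variable {G : Type*} [Group G] {n : ℕ}

lemma nielsenEquiv_refl (Y : Fin n → G) : NielsenEquiv Y Y :=
  ⟨MulEquiv.refl _, fun i => by simp⟩

lemma nielsenEquiv_lift_comp {Y Z : Fin n → G}
    (φ : FreeGroup (Fin n) ≃* FreeGroup (Fin n))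
    (h : ∀ i, FreeGroup.lift Y (φ (FreeGroup.of i)) = Z i) :
    (FreeGroup.lift Y).comp φ.toMonoidHom = FreeGroup.lift Z :=
  FreeGroup.ext_hom _ _ (fun i => by simpa using h i)

lemma NielsenEquiv.symm' {Y Z : Fin n → G} (h : NielsenEquiv Y Z) : NielsenEquiv Z Y := by
  obtain ⟨φ, hφ⟩ := h
  refine ⟨φ.symm, fun i => ?_⟩
  have key := nielsenEquiv_lift_comp φ hφ
  calc FreeGroup.lift Z (φ.symm (FreeGroup.of i))
      = (FreeGroup.lift Y).comp φ.toMonoidHom (φ.symm (FreeGroup.of i)) := by rw [key]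
    _ = FreeGroup.lift Y (φ (φ.symm (FreeGroup.of i))) := rfl
    _ = Y i := by simp

lemma NielsenEquiv.trans' {Y Z W : Fin n → G} (h1 : NielsenEquiv Y Z)
    (h2 : NielsenEquiv Z W) : NielsenEquiv Y W := by
  obtain ⟨φ, hφ⟩ := h1
  obtain ⟨φ', hφ'⟩ := h2
  refine ⟨φ'.trans φ, fun i => ?_⟩
  have key := nielsenEquiv_lift_comp φ hφ
  calc FreeGroup.lift Y ((φ'.trans φ) (FreeGroup.of i))
      = (FreeGroup.lift Y).comp φ.toMonoidHom (φ' (FreeGroup.of i)) := rfl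
    _ = FreeGroup.lift Z (φ' (FreeGroup.of i)) := by rw [key]
    _ = W i := hφ' i

lemma NielsenEquiv.mapAut {Y Z : Fin n → G} (ψ : G ≃* G) (h : NielsenEquiv Y Z) :
    NielsenEquiv (fun i => ψ (Y i)) (fun i => ψ (Z i)) := by
  obtain ⟨φ, hφ⟩ := h
  refine ⟨φ, fun i => ?_⟩
  have hlift : FreeGroup.lift (fun i => ψ (Y i)) = ψ.toMonoidHom.comp (FreeGroup.lift Y) :=
    FreeGroup.ext_hom _ _ (fun i => by simp)
  rw [hlift]
  simp [hφ i]

lemma residuallyFinite_of_mulEquiv {G H : Type*} [Group G] [Group H] (e : G ≃* H)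
    (h : ResiduallyFinite G) : ResiduallyFinite H := by
  intro g hg
  obtain ⟨N, hN, hfin, hgN⟩ := h (e.symm g) (by
    intro h1
    apply hg
    have := congrArg e h1
    simpa using this)
  haveI := hN
  have hNormal : (N.map (e : G →* H)).Normal := hN.map _ e.surjective
  haveI := hNormal
  refine ⟨N.map (e : G →* H), hNormal, ?_, ?_⟩
  · exact Finite.of_equiv _ (QuotientGroup.congr N _ e rfl).toEquiv
  · intro hmem
    apply hgN
    rw [Subgroup.mem_map] at hmem
    obtain ⟨y, hy, hye⟩ := hmem
    have : e.symm g = y := by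
      have := congrArg e.symm hye
      simpa using this.symm
    rwa [this]

lemma residuallyFinite_of_finiteIndex {G : Type*} [Group G] (H : Subgroup G) [H.FiniteIndex]
    (h : ResiduallyFinite H) : ResiduallyFinite G := by
  intro g hg
  by_cases hgH : g ∈ H
  · obtain ⟨M, hM, hMfin, hgM⟩ := h ⟨g, hgH⟩ (by
      intro h1
      exact hg (by simpa using congrArg Subtype.val h1))
    haveI : Finite (H ⧸ M) := hMfin
    haveI : (M.map H.subtype).FiniteIndex := by
      constructor
      rw [Subgroup.index_map_subtype]
      exact Nat.mul_ne_zero Subgroup.index_ne_zero_of_finite Subgroup.FiniteIndex.index_ne_zero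
    refine ⟨(M.map H.subtype).normalCore, inferInstance, inferInstance, ?_⟩
    intro hmem
    have hg' : g ∈ M.map H.subtype := Subgroup.normalCore_le _ hmem
    rw [Subgroup.mem_map] at hg'
    obtain ⟨m, hm, hme⟩ := hg'
    have : (⟨g, hgH⟩ : H) = m := Subtype.ext hme.symm
    rw [this] at hgM
    exact hgM hm
  · refine ⟨H.normalCore, inferInstance, inferInstance, ?_⟩
    intro hmem
    exact hgH (H.normalCore_le hmem)

end Aux

theorem statement_3 (n : ℕ) (rels : Set (FreeGroup (Fin n)))
    (L : Subgroup (MulAut (PresentedGroup rels)))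
    (hL : ∀ φ : MulAut (PresentedGroup rels), φ ∈ L ↔
      NielsenEquiv (fun i => φ (PresentedGroup.of i))
        (fun i => (PresentedGroup.of i : PresentedGroup rels)))
    (hfin : Finite (Quot (fun (Y Z : {Y : Fin n → PresentedGroup rels //
      SameTSystem (fun i => (PresentedGroup.of i : PresentedGroup rels)) Y}) =>
      NielsenEquiv Y.1 Z.1)))
    (hres : ResiduallyFinite
      (L ⧸ ((innAut (PresentedGroup rels)).subgroupOf L))) :
    ResiduallyFinite (Out (PresentedGroup rels)) := by
  set G := PresentedGroup rels with hG
  set x : Fin n → G := fun i => PresentedGroup.of i with hx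
  -- the canonical lift equals the projection
  have hlift_mk : FreeGroup.lift x = PresentedGroup.mk rels :=
    FreeGroup.ext_hom _ _ (fun i => rfl)
  -- Step 1 : inner automorphisms are tame
  have hInnL : innAut G ≤ L := by
    rintro φ ⟨g, rfl⟩
    obtain ⟨w, rfl⟩ := PresentedGroup.mk_surjective rels g
    rw [hL]
    set g := PresentedGroup.mk rels w with hg
    refine ⟨(MulAut.conj w⁻¹ : FreeGroup (Fin n) ≃* FreeGroup (Fin n)), fun i => ?_⟩
    have key : FreeGroup.lift (fun i => (MulAut.conj g) (x i))
        = (MulAut.conj g).toMonoidHom.comp (PresentedGroup.mk rels) := by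
      refine FreeGroup.ext_hom _ _ (fun i => ?_)
      simp only [FreeGroup.lift_apply_of, MonoidHom.comp_apply]
      rfl
    show FreeGroup.lift (fun i => (MulAut.conj g) (x i))
        ((MulAut.conj w⁻¹) (FreeGroup.of i)) = x i
    have harg : (MulAut.conj w⁻¹ : FreeGroup (Fin n) ≃* FreeGroup (Fin n)) (FreeGroup.of i)
        = w⁻¹ * FreeGroup.of i * w := by
      rw [MulAut.conj_apply, inv_inv]
    have hmkof : PresentedGroup.mk rels (FreeGroup.of i) = x i := rfl
    rw [harg, key]
    simp only [MonoidHom.comp_apply, map_mul, map_inv, hmkof, ← hg]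
    show ((MulAut.conj g) g)⁻¹ * (MulAut.conj g) (x i) * (MulAut.conj g) g = x i
    simp only [MulAut.conj_apply]
    group
  -- Step 2 : L has finite index in MulAut G
  haveI : Finite (MulAut G ⧸ L) := by
    set r := fun (Y Z : {Y : Fin n → G // SameTSystem x Y}) => NielsenEquiv Y.1 Z.1 with hr
    have hrEquiv : Equivalence r :=
      ⟨fun Y => nielsenEquiv_refl _, fun h => h.symm', fun h h' => h.trans' h'⟩
    set F0 : MulAut G → Quot r := fun φ =>
      Quot.mk r ⟨fun i => φ (x i), ⟨(φ : G ≃* G), nielsenEquiv_refl _⟩⟩ with hF0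
    have wd : ∀ φ ψ : MulAut G, (QuotientGroup.leftRel L) φ ψ → F0 φ = F0 ψ := by
      intro φ ψ h
      rw [QuotientGroup.leftRel_apply, hL] at h
      apply Quot.sound
      show NielsenEquiv (fun i => φ (x i)) (fun i => ψ (x i))
      have h2 := h.mapAut (φ : G ≃* G)
      have hfun : (fun i => (φ : G ≃* G) ((φ⁻¹ * ψ) (x i))) = fun i => ψ (x i) := by
        funext i
        simp [MulAut.mul_apply, MulAut.inv_def]
      rw [hfun] at h2
      exact h2.symm'
    have hinj : Function.Injective (Quotient.lift F0 wd : MulAut G ⧸ L → Quot r) := by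
      intro a b
      refine Quotient.inductionOn₂ a b (fun φ ψ h => ?_)
      have h' : F0 φ = F0 ψ := h
      have hN : NielsenEquiv (fun i => φ (x i)) (fun i => ψ (x i)) :=
        (hrEquiv.eqvGen_iff).mp (Quot.eqvGen_exact h')
      apply Quotient.sound
      show (QuotientGroup.leftRel L) φ ψ
      rw [QuotientGroup.leftRel_apply, hL]
      have h2 := hN.symm'.mapAut ((φ⁻¹ : MulAut G) : G ≃* G)
      have hfun1 : (fun i => ((φ⁻¹ : MulAut G) : G ≃* G) (ψ (x i)))
          = fun i => (φ⁻¹ * ψ) (x i) := by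
        funext i
        simp [MulAut.mul_apply]
      have hfun2 : (fun i => ((φ⁻¹ : MulAut G) : G ≃* G) (φ (x i))) = x := by
        funext i
        simp [MulAut.inv_def]
      rw [hfun1, hfun2] at h2
      exact h2
    exact Finite.of_injective _ hinj
  haveI : L.FiniteIndex := ⟨Subgroup.index_ne_zero_of_finite⟩
  -- Step 3 : the image of L in Out G
  set π := QuotientGroup.mk' (innAut G) with hπ
  set H : Subgroup (Out G) := L.map π with hH
  haveI : H.FiniteIndex := by
    constructor
    rw [hH, Subgroup.index_map_eq _ (QuotientGroup.mk'_surjective _)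
      (by rw [QuotientGroup.ker_mk']; exact hInnL)]
    exact Subgroup.FiniteIndex.index_ne_zero
  have hHres : ResiduallyFinite H := by
    set f := π.comp L.subtype with hf
    have hker : ((innAut G).subgroupOf L) = f.ker := by
      ext y
      rw [Subgroup.mem_subgroupOf, MonoidHom.mem_ker]
      show (y : G ≃* G) ∈ innAut G ↔ π (L.subtype y) = 1
      rw [hπ]
      exact (QuotientGroup.eq_one_iff _).symm
    have hrange : f.range = H := by
      rw [hf, MonoidHom.range_comp, Subgroup.range_subtype, hH]
    exact residuallyFinite_of_mulEquiv
      ((QuotientGroup.quotientMulEquivOfEq hker).trans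
        ((QuotientGroup.quotientKerEquivRange f).trans (MulEquiv.subgroupCongr hrange)))
      hres
  exact residuallyFinite_of_finiteIndex H hHres
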